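/- arXiv:2110.04605 — 4 statements merged into one kernel-verified Lean document; each statement's English description precedes it below -/
import Mathlib

section
/- Let G be a symmetric positive definite 2×2 matrix, let ν ∈ ℝ² be a unit vector and τ = −ν^⊥. With γ(p) = √(G⁻¹p·p) and γ'' its Hessian, the identity γ''(ν) τ · τ = det(G⁻¹)/γ(ν)³ holds. -/
/-!
Writing `γ(p) = √(B p p)` for a symmetric bilinear form `B`, one has `Dγ(p) = B p / γ(p)`, hence
`D²γ(x)(v, w) = (B x x · B v w - B x v · B x w) / γ(x)³`. For `v = w` the numerator is a Gram
determinant; in the plane it equals `det B · (x₀v₁ - x₁v₀)²`, and for `x = ν`, `v = -ν^⊥` the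
bracket is `-|ν|² = -1`.
-/

open Matrix

/-- Anticlockwise rotation by π/2. -/
def perp (p : Fin 2 → ℝ) : Fin 2 → ℝ := ![-(p 1), p 0]

section SqrtBilinSelf

variable {E : Type*} [NormedAddCommGroup E] [NormedSpace ℝ E]
  {B : E →L[ℝ] E →L[ℝ] ℝ} {x : E}

theorem hasFDerivAt_bilin_self (hB : ∀ u v, B u v = B v u) (x : E) :
    HasFDerivAt (fun p => B p p) ((2 : ℝ) • B x) x := by
  refine (B.hasFDerivAt_of_bilinear (hasFDerivAt_id x) (hasFDerivAt_id x)).congr_fderiv ?_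
  ext v
  simp [hB v x, two_mul]

theorem hasFDerivAt_sqrt_bilin_self (hB : ∀ u v, B u v = B v u) (hx : 0 < B x x) :
    HasFDerivAt (fun p => √(B p p)) ((√(B x x))⁻¹ • B x) x := by
  refine ((hasFDerivAt_bilin_self hB x).sqrt hx.ne').congr_fderiv ?_
  have : √(B x x) ≠ 0 := (Real.sqrt_pos.2 hx).ne'
  ext v
  simp only [one_div, _root_.mul_inv_rev, _root_.smul_apply, smul_eq_mul]
  field_simp

theorem fderiv_fderiv_sqrt_bilin_self_apply (hB : ∀ u v, B u v = B v u) (hx : 0 < B x x)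
    (v w : E) :
    fderiv ℝ (fderiv ℝ fun p => √(B p p)) x v w =
      (B x x * B v w - B x v * B x w) / √(B x x) ^ 3 := by
  set γ : E → ℝ := fun p => √(B p p)
  have hγx : γ x ≠ 0 := (Real.sqrt_pos.2 hx).ne'
  have hDγ : fderiv ℝ γ =ᶠ[nhds x] fun p => (γ p)⁻¹ • B p := by
    have hQ : Continuous fun p => B p p := by fun_prop
    filter_upwards [(hQ.tendsto x).eventually (lt_mem_nhds hx)] with p hp
    exact (hasFDerivAt_sqrt_bilin_self hB hp).fderiv
  have hinv : HasFDerivAt (fun p => (γ p)⁻¹) (-(γ x ^ 2)⁻¹ • ((γ x)⁻¹ • B x)) x :=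
    (hasDerivAt_inv hγx).comp_hasFDerivAt x (hasFDerivAt_sqrt_bilin_self hB hx)
  rw [hDγ.fderiv_eq, (hinv.fun_smul B.hasFDerivAt).fderiv]
  simp only [_root_.add_apply, _root_.smul_apply,
    ContinuousLinearMap.smulRight_apply, smul_eq_mul, neg_mul, neg_smul,
    _root_.neg_apply]
  field_simp
  rw [Real.sq_sqrt hx.le]
  ring

end SqrtBilinSelf

namespace Matrix

variable {n : Type*} [Fintype n]

noncomputable def toContinuousLinearMap₂ [DecidableEq n] (A : Matrix n n ℝ) :
    (n → ℝ) →L[ℝ] (n → ℝ) →L[ℝ] ℝ :=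
  LinearMap.toContinuousLinearMap
    (LinearMap.toContinuousLinearMap.toLinearMap ∘ₗ toLinearMap₂' ℝ A)

@[simp]
theorem toContinuousLinearMap₂_apply [DecidableEq n] (A : Matrix n n ℝ) (u v : n → ℝ) :
    A.toContinuousLinearMap₂ u v = u ⬝ᵥ A *ᵥ v := by
  simp [toContinuousLinearMap₂, toLinearMap₂'_apply']

theorem IsSymm.dotProduct_mulVec_comm {R : Type*} [CommSemiring R] {A : Matrix n n R}
    (hA : A.IsSymm) (u v : n → R) : u ⬝ᵥ A *ᵥ v = v ⬝ᵥ A *ᵥ u := by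
  rw [dotProduct_mulVec, ← mulVec_transpose, hA, dotProduct_comm]

theorem IsSymm.gram_det_fin_two {R : Type*} [CommRing R] {A : Matrix (Fin 2) (Fin 2) R}
    (hA : A.IsSymm) (u v : Fin 2 → R) :
    (u ⬝ᵥ A *ᵥ u) * (v ⬝ᵥ A *ᵥ v) - (u ⬝ᵥ A *ᵥ v) ^ 2 = A.det * (u 0 * v 1 - u 1 * v 0) ^ 2 := by
  simp only [dotProduct, mulVec, Fin.sum_univ_two, det_fin_two, hA.apply 0 1]
  ring

end Matrix

/-- For γ(p) = √(G⁻¹p·p) with G symmetric positive definite, a unit vector ν and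
    τ = −ν^⊥, the Hessian satisfies γ''(ν) τ · τ = det(G⁻¹)/γ(ν)³. -/
theorem riemannian_hessian_tangent_identity
    (G : Matrix (Fin 2) (Fin 2) ℝ) (hG : G.PosDef)
    (ν τ : Fin 2 → ℝ) (hν : ν ⬝ᵥ ν = 1) (hτ : τ = -perp ν) :
    fderiv ℝ (fderiv ℝ (fun p : Fin 2 → ℝ => Real.sqrt (G⁻¹.mulVec p ⬝ᵥ p))) ν τ τ =
      (G⁻¹).det / (Real.sqrt (G⁻¹.mulVec ν ⬝ᵥ ν)) ^ 3 := by
  have hA : G⁻¹.IsSymm := isHermitian_iff_isSymm.1 hG.inv.isHermitian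
  set B := G⁻¹.toContinuousLinearMap₂
  have hB : ∀ u v, B u v = B v u := by simpa [B] using hA.dotProduct_mulVec_comm
  have hQ : ∀ p, G⁻¹ *ᵥ p ⬝ᵥ p = B p p := fun p => by simp [B, dotProduct_comm]
  have hν0 : ν ≠ 0 := by rintro rfl; simp at hν
  have hpos : 0 < B ν ν := by simpa [B] using hG.inv.dotProduct_mulVec_pos hν0
  have hcross : ν 0 * τ 1 - ν 1 * τ 0 = -(ν ⬝ᵥ ν) := by
    simp only [hτ, perp, dotProduct, Fin.sum_univ_two, Pi.neg_apply, cons_val_zero, cons_val_one,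
      cons_val_fin_one]
    ring
  have hgram : B ν ν * B τ τ - B ν τ * B ν τ = G⁻¹.det := by
    simpa [B, sq, hcross, hν] using hA.gram_det_fin_two ν τ
  simp only [hQ]
  rw [fderiv_fderiv_sqrt_bilin_self_apply hB hpos, hgram]
end

section
/- Let γ₀(p) = Σ_{ℓ=1}^L √(Λ_ℓ p · p) with each Λ_ℓ symmetric positive definite, let Φ₀(p) = (1/2)γ₀(p)², and for q ≠ 0 define B(q) = γ₀(q) Σ_ℓ Λ_ℓ/√(Λ_ℓ q·q). Then B(q) p · (p − q) ≥ Φ₀(p) − Φ₀(q) for all p ∈ ℝ² and q ≠ 0. -/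
/-!
Write `a_ℓ = √(Λ_ℓ p·p)` and `b_ℓ = √(Λ_ℓ q·q) > 0`, so that
`B(q) p·(p - q) = (Σ b) · Σ (a_ℓ² - Λ_ℓ p·q) / b_ℓ`.
Cauchy–Schwarz for the inner product `Λ_ℓ` gives `Λ_ℓ p·q ≤ a_ℓ b_ℓ`, and Sedrakyan's inequality
`(Σ a)² ≤ (Σ a²/b)(Σ b)` bounds the left side below by `(Σ a)² - (Σ a)(Σ b)`, which is at least
`½ (Σ a)² - ½ (Σ b)²`.
-/

open Matrix

theorem Matrix.PosSemidef.mulVec_dotProduct_le_sqrt_mul_sqrt {n : Type*} [Fintype n]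
    {M : Matrix n n ℝ} (hM : M.PosSemidef) (x y : n → ℝ) :
    M *ᵥ x ⬝ᵥ y ≤ √(M *ᵥ x ⬝ᵥ x) * √(M *ᵥ y ⬝ᵥ y) := by
  let := M.toSeminormedAddCommGroup hM
  let := M.toInnerProductSpace hM
  have h := real_inner_le_norm y x
  rwa [norm_eq_sqrt_real_inner, norm_eq_sqrt_real_inner, mul_comm] at h

theorem half_sq_sum_sub_half_sq_sum_le {ι : Type*} (s : Finset ι) {a b c : ι → ℝ}
    (hb : ∀ i ∈ s, 0 < b i) (hc : ∀ i ∈ s, c i ≤ a i * b i) :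
    (1 / 2) * (∑ i ∈ s, a i) ^ 2 - (1 / 2) * (∑ i ∈ s, b i) ^ 2 ≤
      (∑ i ∈ s, b i) * ∑ i ∈ s, (b i)⁻¹ * (a i ^ 2 - c i) := by
  have hsedrakyan : (∑ i ∈ s, a i) ^ 2 ≤ (∑ i ∈ s, (b i)⁻¹ * a i ^ 2) * ∑ i ∈ s, b i :=
    Finset.sum_sq_le_sum_mul_sum_of_sq_le_mul s
      (fun i hi => by have := hb i hi; positivity) (fun i hi => (hb i hi).le)
      (fun i hi => by rw [mul_right_comm, inv_mul_cancel₀ (hb i hi).ne', one_mul])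
  have hterm : ∑ i ∈ s, ((b i)⁻¹ * a i ^ 2 - a i) ≤ ∑ i ∈ s, (b i)⁻¹ * (a i ^ 2 - c i) := by
    refine Finset.sum_le_sum fun i hi => ?_
    have : (b i)⁻¹ * c i ≤ a i := by
      rw [inv_mul_le_iff₀ (hb i hi), mul_comm]; exact hc i hi
    linarith [mul_sub (b i)⁻¹ (a i ^ 2) (c i)]
  rw [Finset.sum_sub_distrib] at hterm
  have hB : 0 ≤ ∑ i ∈ s, b i := Finset.sum_nonneg fun i hi => (hb i hi).le
  nlinarith [mul_le_mul_of_nonneg_left hterm hB, sq_nonneg (∑ i ∈ s, a i - ∑ i ∈ s, b i)]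

/-- The key convexity inequality B(q) p · (p − q) ≥ Φ₀(p) − Φ₀(q) for
    γ₀(p) = Σ_ℓ √(Λ_ℓ p·p), Φ₀ = (1/2)γ₀², B(q) = γ₀(q) Σ_ℓ Λ_ℓ/√(Λ_ℓ q·q). -/
theorem B_convexity_inequality
    (L : ℕ) (Λ : Fin L → Matrix (Fin 2) (Fin 2) ℝ)
    (hΛ : ∀ ℓ, (Λ ℓ).PosDef)
    (γ₀ : (Fin 2 → ℝ) → ℝ)
    (hγ₀ : γ₀ = fun p => ∑ ℓ, Real.sqrt ((Λ ℓ).mulVec p ⬝ᵥ p))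
    (Φ₀ : (Fin 2 → ℝ) → ℝ)
    (hΦ₀ : Φ₀ = fun p => (1 / 2 : ℝ) * (γ₀ p) ^ 2)
    (B : (Fin 2 → ℝ) → Matrix (Fin 2) (Fin 2) ℝ)
    (hB : ∀ q : Fin 2 → ℝ, q ≠ 0 →
      B q = γ₀ q • ∑ ℓ, (Real.sqrt ((Λ ℓ).mulVec q ⬝ᵥ q))⁻¹ • Λ ℓ) :
    ∀ (p q : Fin 2 → ℝ), q ≠ 0 →
      (B q).mulVec p ⬝ᵥ (p - q) ≥ Φ₀ p - Φ₀ q := by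
  intro p q hq
  have hq_pos : ∀ ℓ ∈ Finset.univ, 0 < √((Λ ℓ).mulVec q ⬝ᵥ q) := fun ℓ _ =>
    Real.sqrt_pos.2 (by simpa [dotProduct_comm] using (hΛ ℓ).dotProduct_mulVec_pos hq)
  have hp_sq : ∀ ℓ, √((Λ ℓ).mulVec p ⬝ᵥ p) ^ 2 = (Λ ℓ).mulVec p ⬝ᵥ p := fun ℓ =>
    Real.sq_sqrt (by simpa [dotProduct_comm] using (hΛ ℓ).posSemidef.dotProduct_mulVec_nonneg p)
  have hlhs : (B q).mulVec p ⬝ᵥ (p - q) = (∑ ℓ, √((Λ ℓ).mulVec q ⬝ᵥ q)) *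
      ∑ ℓ, (√((Λ ℓ).mulVec q ⬝ᵥ q))⁻¹ *
        (√((Λ ℓ).mulVec p ⬝ᵥ p) ^ 2 - (Λ ℓ).mulVec p ⬝ᵥ q) := by
    simp only [hB q hq, hγ₀, hp_sq, smul_mulVec, sum_mulVec, sum_dotProduct, smul_dotProduct,
      smul_eq_mul, dotProduct_sub, mul_sub, Finset.sum_sub_distrib]
  rw [ge_iff_le, hlhs, hΦ₀, hγ₀]
  exact half_sq_sum_sub_half_sq_sum_le _ hq_pos fun ℓ _ =>
    (hΛ ℓ).posSemidef.mulVec_dotProduct_le_sqrt_mul_sqrt p q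
end

section
/- For the anisotropy γ₀(p) = |p|(1 + δ cos(kθ(p))) in polar form p = |p|(cos θ, sin θ) with k ∈ ℕ, k ≥ 2, and 0 ≤ δ, the strict convexity condition γ₀''(p)q·q > 0 for all orthonormal p, q holds if and only if δ < 1/(k² − 1). -/
/-!
Identify `ℝ²` with `ℂ`. Since `Re (z ^ k) = |z| ^ k cos (k arg z)`, the anisotropy is
`γ₀ z = |z| + δ Re (z ^ k) |z| ^ (1 - k)`, which is smooth away from `0`, so its Hessian can be
computed by the product rule. For orthonormal `p, q` one has `q = ± i p`, hence `q² = -p²`, and all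
terms containing `⟪p, q⟫` vanish: `γ₀''(p) q q = 1 - δ (k² - 1) Re (p ^ k)`. Its minimum over the
unit circle is `1 - δ (k² - 1)`, attained at `p = 1`.
-/

open Matrix Complex ContinuousLinearMap Filter Set Topology
open scoped InnerProductSpace

theorem ContinuousLinearEquiv.fderiv_fderiv_comp_right_apply {𝕜 E F G : Type*}
    [NontriviallyNormedField 𝕜] [NormedAddCommGroup E] [NormedSpace 𝕜 E]
    [NormedAddCommGroup F] [NormedSpace 𝕜 F] [NormedAddCommGroup G] [NormedSpace 𝕜 G]
    (g : G ≃L[𝕜] E) (f : E → F) (x u v : G) :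
    fderiv 𝕜 (fderiv 𝕜 (f ∘ g)) x u v = fderiv 𝕜 (fderiv 𝕜 f) (g x) (g u) (g v) := by
  have h := g.iteratedFDerivWithin_comp_right f uniqueDiffOn_univ (mem_univ (g x)) 2
  simp only [preimage_univ, iteratedFDerivWithin_univ] at h
  simpa [iteratedFDeriv_two_apply] using congr($h ![u, v])

section
variable {F : Type*} [NormedAddCommGroup F] [InnerProductSpace ℝ F] {x : F}

theorem hasFDerivAt_norm (hx : x ≠ 0) : HasFDerivAt (‖·‖) (‖x‖⁻¹ • innerSL ℝ x) x := by
  have hx2 : ‖x‖ ^ 2 ≠ 0 := by positivity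
  have h := (Real.hasDerivAt_sqrt hx2).comp_hasFDerivAt x
    (hasStrictFDerivAt_norm_sq x).hasFDerivAt
  refine (h.congr_fderiv ?_).congr_of_eventuallyEq
    (.of_forall fun y => (Real.sqrt_sq (norm_nonneg y)).symm)
  ext y
  simp [field]

theorem hasFDerivAt_norm_zpow (hx : x ≠ 0) (m : ℤ) :
    HasFDerivAt (‖·‖ ^ m) ((m * ‖x‖ ^ (m - 2)) • innerSL ℝ x) x := by
  have hx0 : ‖x‖ ≠ 0 := norm_ne_zero_iff.2 hx
  refine ((hasDerivAt_zpow m ‖x‖ (.inl hx0)).comp_hasFDerivAt x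
    (hasFDerivAt_norm hx)).congr_fderiv ?_
  rw [smul_smul, mul_assoc, ← zpow_sub_one₀ hx0, sub_sub, one_add_one_eq_two]
end

theorem Complex.re_pow_eq_norm_pow_mul_cos (z : ℂ) (k : ℕ) :
    (z ^ k).re = ‖z‖ ^ k * Real.cos (k * arg z) := by
  rw [← norm_mul_cos_arg, norm_pow, ← Real.Angle.cos_coe, arg_pow_coe_angle,
    ← Real.Angle.coe_nsmul, nsmul_eq_mul, Real.Angle.cos_coe]

noncomputable def finTwoEquivComplex : (Fin 2 → ℝ) ≃L[ℝ] ℂ :=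
  (ContinuousLinearEquiv.finTwoArrow ℝ ℝ).trans equivRealProdCLM.symm

@[simp] theorem finTwoEquivComplex_apply (p : Fin 2 → ℝ) :
    finTwoEquivComplex p = ⟨p 0, p 1⟩ := rfl

theorem dotProduct_eq_inner_finTwoEquivComplex (p q : Fin 2 → ℝ) :
    p ⬝ᵥ q = ⟪finTwoEquivComplex p, finTwoEquivComplex q⟫_ℝ := by
  simp [dotProduct, Fin.sum_univ_two, Complex.inner, mul_comm]

noncomputable def reMul : ℂ →L[ℝ] ℂ →L[ℝ] ℝ :=
  (compL ℝ ℂ ℂ ℝ reCLM).comp (mul ℝ ℂ)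

@[simp] theorem reMul_apply (c w : ℂ) : reMul c w = (c * w).re := rfl

theorem HasDerivAt.hasFDerivAt_re {f : ℂ → ℂ} {f' z : ℂ} (h : HasDerivAt f f' z) :
    HasFDerivAt (fun z => (f z).re) (reMul f') z :=
  (reCLM.hasFDerivAt.comp z (h.hasFDerivAt.restrictScalars ℝ)).congr_fderiv <| by
    ext w; simp [mul_comm]

theorem HasDerivAt.hasFDerivAt_reMul {f : ℂ → ℂ} {f' z : ℂ} (h : HasDerivAt f f' z) :
    HasFDerivAt (fun z => reMul (f z)) (reMul.comp (ContinuousLinearMap.mul ℝ ℂ f')) z :=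
  (reMul.hasFDerivAt.comp z (h.hasFDerivAt.restrictScalars ℝ)).congr_fderiv <| by
    ext w; simp [mul_comm]

noncomputable def kFoldAnisotropy (δ : ℝ) (k : ℕ) (z : ℂ) : ℝ :=
  ‖z‖ + δ * ((z ^ k).re * ‖z‖ ^ (1 - k : ℤ))

theorem norm_mul_one_add_cos_arg_eq_kFoldAnisotropy (δ : ℝ) {k : ℕ} (hk : k ≠ 0) (z : ℂ) :
    ‖z‖ * (1 + δ * Real.cos (k * arg z)) = kFoldAnisotropy δ k z := by
  rcases eq_or_ne z 0 with rfl | hz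
  · simp [kFoldAnisotropy, zero_pow hk]
  have hz' : ‖z‖ ≠ 0 := norm_ne_zero_iff.2 hz
  rw [kFoldAnisotropy, re_pow_eq_norm_pow_mul_cos, mul_right_comm, ← zpow_natCast,
    ← zpow_add₀ hz']
  simp only [add_sub_cancel, zpow_one]
  ring

noncomputable def kFoldAnisotropyFDeriv (δ : ℝ) (k : ℕ) (z : ℂ) : ℂ →L[ℝ] ℝ :=
  (‖z‖ ^ (-1 : ℤ) + δ * (1 - k) * ((z ^ k).re * ‖z‖ ^ (-1 - k : ℤ))) • innerSL ℝ z +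
    (δ * ‖z‖ ^ (1 - k : ℤ)) • reMul (k * z ^ (k - 1))

theorem hasFDerivAt_kFoldAnisotropy (δ : ℝ) (k : ℕ) {z : ℂ} (hz : z ≠ 0) :
    HasFDerivAt (kFoldAnisotropy δ k) (kFoldAnisotropyFDeriv δ k z) z := by
  have h := (hasFDerivAt_norm_zpow hz 1).add
    ((((hasDerivAt_pow k z).hasFDerivAt_re).mul (hasFDerivAt_norm_zpow hz (1 - k))).const_mul δ)
  simp only [zpow_one] at h
  refine h.congr_fderiv ?_
  ext w
  simp [kFoldAnisotropyFDeriv, show (1 - k - 2 : ℤ) = -1 - k by ring]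
  ring

theorem Complex.sq_eq_neg_sq_of_inner_eq_zero {p q : ℂ} (hp : ‖p‖ = 1) (hq : ‖q‖ = 1)
    (hpq : ⟪p, q⟫_ℝ = 0) : q ^ 2 = -p ^ 2 := by
  set u := q * (starRingEnd ℂ) p
  have hu_re : u.re = 0 := by rwa [Complex.inner] at hpq
  have hu_im : u.im * u.im = 1 := by
    have h := Complex.sq_norm u
    rw [norm_mul, RCLike.norm_conj, hp, hq, normSq_apply, hu_re] at h
    linarith
  have hu_sq : u ^ 2 = -1 := by
    apply Complex.ext <;> simp [sq, hu_re, hu_im]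
  have hq_eq : q = u * p := by
    rw [mul_assoc, conj_mul', hp]
    simp
  rw [hq_eq, mul_pow, hu_sq, neg_one_mul]

theorem fderiv_fderiv_kFoldAnisotropy_apply (δ : ℝ) {k : ℕ} (hk : 2 ≤ k) {p q : ℂ}
    (hp : ‖p‖ = 1) (hq : ‖q‖ = 1) (hpq : ⟪p, q⟫_ℝ = 0) :
    fderiv ℝ (fderiv ℝ (kFoldAnisotropy δ k)) p q q = 1 - δ * (k ^ 2 - 1) * (p ^ k).re := by
  have hp0 : p ≠ 0 := by rintro rfl; simp at hp
  have hfderiv : fderiv ℝ (kFoldAnisotropy δ k) =ᶠ[𝓝 p] kFoldAnisotropyFDeriv δ k :=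
    eventually_of_mem (isOpen_ne.mem_nhds hp0) fun z hz =>
      (hasFDerivAt_kFoldAnisotropy δ k hz).fderiv
  have hcoeff₁ := (hasFDerivAt_norm_zpow hp0 (-1)).add
    ((((hasDerivAt_pow k p).hasFDerivAt_re).mul (hasFDerivAt_norm_zpow hp0 (-1 - k))).const_mul
      (δ * (1 - k)))
  have hcoeff₂ := (hasFDerivAt_norm_zpow hp0 (1 - k)).const_mul δ
  have hpow := ((hasDerivAt_pow (k - 1) p).const_mul (k : ℂ)).hasFDerivAt_reMul
  have h : HasFDerivAt (kFoldAnisotropyFDeriv δ k) _ p :=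
    (hcoeff₁.smul (innerSL ℝ (E := ℂ)).hasFDerivAt).add (hcoeff₂.smul hpow)
  have hsecond : ((k : ℂ) * ((k - 1 : ℕ) * p ^ (k - 1 - 1)) * q * q).re =
      -(k * (k - 1) * (p ^ k).re) := by
    have hq2 : p ^ (k - 1 - 1) * q ^ 2 = -p ^ k := by
      rw [Complex.sq_eq_neg_sq_of_inner_eq_zero hp hq hpq, mul_neg, ← pow_add,
        show k - 1 - 1 + 2 = k by omega]
    rw [show (k : ℂ) * ((k - 1 : ℕ) * p ^ (k - 1 - 1)) * q * q =
        ((-(k * (k - 1)) : ℝ) : ℂ) * p ^ k by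
      push_cast [Nat.cast_sub (by omega : 1 ≤ k)]
      linear_combination (k * (k - 1) : ℂ) * hq2, re_ofReal_mul]
    ring
  rw [hfderiv.fderiv_eq, h.fderiv]
  simp only [_root_.add_apply, _root_.smul_apply, smulRight_apply,
    coe_comp, Function.comp_apply, reMul_apply, ContinuousLinearMap.mul_apply', smul_eq_mul,
    Pi.add_apply, Pi.mul_apply, hp, _root_.one_zpow, hsecond]
  rw [innerSL_apply_apply, innerSL_apply_apply, hpq, real_inner_self_eq_norm_sq, hq]
  push_cast
  ring

theorem forall_orthonormal_one_sub_mul_re_pow_pos_iff {c : ℝ} (hc : 0 ≤ c) (k : ℕ) :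
    (∀ p q : ℂ, ‖p‖ = 1 → ‖q‖ = 1 → ⟪p, q⟫_ℝ = 0 → 0 < 1 - c * (p ^ k).re) ↔ c < 1 := by
  refine ⟨fun h => by simpa using h 1 I (by simp) (by simp) (by simp [Complex.inner]), ?_⟩
  intro hc1 p q hp _ _
  have hre : (p ^ k).re ≤ 1 := (re_le_norm _).trans (by simp [hp])
  nlinarith

/-- For the k-fold anisotropy γ₀(p) = |p|(1 + δ cos(kθ(p))), k ≥ 2, δ ≥ 0,
    strict convexity γ₀''(p)q·q > 0 for all orthonormal p, q holds iff
    δ < 1/(k² − 1). -/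
theorem kfold_anisotropy_strictly_convex_iff
    (k : ℕ) (hk : 2 ≤ k) (δ : ℝ) (hδ : 0 ≤ δ)
    (γ₀ : (Fin 2 → ℝ) → ℝ)
    (hγ₀ : γ₀ = fun p => Real.sqrt (p ⬝ᵥ p) *
      (1 + δ * Real.cos ((k : ℝ) * Complex.arg ⟨p 0, p 1⟩))) :
    (∀ p q : Fin 2 → ℝ, p ⬝ᵥ p = 1 → q ⬝ᵥ q = 1 → p ⬝ᵥ q = 0 →
      0 < fderiv ℝ (fderiv ℝ γ₀) p q q) ↔ δ < 1 / ((k : ℝ) ^ 2 - 1) := by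
  have hk' : (0 : ℝ) < k ^ 2 - 1 := by
    have : (2 : ℝ) ≤ k := by exact_mod_cast hk
    nlinarith
  have hγ : γ₀ = kFoldAnisotropy δ k ∘ finTwoEquivComplex := by
    subst hγ₀
    funext p
    rw [Function.comp_apply, ← norm_mul_one_add_cos_arg_eq_kFoldAnisotropy δ (by omega),
      dotProduct_eq_inner_finTwoEquivComplex, real_inner_self_eq_norm_sq,
      Real.sqrt_sq (norm_nonneg _), finTwoEquivComplex_apply]
  rw [lt_div_iff₀ hk', ← forall_orthonormal_one_sub_mul_re_pow_pos_iff (mul_nonneg hδ hk'.le) k,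
    finTwoEquivComplex.surjective.forall₂]
  simp only [hγ, ContinuousLinearEquiv.fderiv_fderiv_comp_right_apply,
    dotProduct_eq_inner_finTwoEquivComplex, real_inner_self_eq_norm_sq,
    pow_eq_one_iff_of_nonneg (norm_nonneg _) two_ne_zero]
  refine forall₂_congr fun p q => imp_congr_right fun hp => imp_congr_right fun hq =>
    imp_congr_right fun hpq => ?_
  rw [fderiv_fderiv_kFoldAnisotropy_apply δ hk hp hq hpq]
end

section
/- Let δ ∈ (0,1] and γ₀(p) = √(p₁² + δ²p₂²). Then for t ∈ [0, 1/2), the parameterization x(ρ,t) = √(1−2t)(cos 2πρ, δ sin 2πρ) of shrinking ellipses satisfies the anisotropic curve shortening law (1/γ₀(ν)) x_t · ν = κ γ₀''(ν)τ·τ, where τ = x_ρ/|x_ρ|, ν = τ^⊥, κ = x_{ρρ}·ν/|x_ρ|². -/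
/-!
The curve `x(·, t)` is `√(1 - 2t)` times `P(ρ) = (cos 2πρ, δ sin 2πρ)`, the boundary of the Wulff
shape `{y | y₁² + y₂² / δ² ≤ 1}` of `γ₀ = √B(p, p)`, `B(p, w) = p₁w₁ + δ²p₂w₂`. Along it
`P · ν = -γ₀(ν)`, so the normal speed `x_t · ν / γ₀(ν)` is `-(d/dt)√(1 - 2t) = 1 / √(1 - 2t)`.
Differentiating `γ₀` twice gives `γ₀''(p)w·w = (B(p,p)B(w,w) - B(p,w)²) / γ₀(p)³`, and the Lagrange
identity `B(p,p)B(w,w) - B(p,w)² = δ²(p ∧ w)²` turns `κ γ₀''(ν)τ·τ` into `1 / √(1 - 2t)` as well.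
-/

open Matrix Real

open Filter Topology

section SqrtQuadraticForm

variable {E : Type*} [NormedAddCommGroup E] [NormedSpace ℝ E] (B : E →L[ℝ] E →L[ℝ] ℝ)

theorem hasFDerivAt_apply_self (hB : ∀ u v, B u v = B v u) (p : E) :
    HasFDerivAt (fun q => B q q) (2 • B p) p := by
  refine (B.hasFDerivAt_of_bilinear (hasFDerivAt_id p) (hasFDerivAt_id p)).congr_fderiv ?_
  ext w
  simp [hB w p, two_smul]

theorem hasFDerivAt_sqrt_apply_self (hB : ∀ u v, B u v = B v u) {p : E} (hp : B p p ≠ 0) :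
    HasFDerivAt (fun q => √(B q q)) ((√(B p p))⁻¹ • B p) p := by
  refine ((hasDerivAt_sqrt hp).comp_hasFDerivAt (f := fun q => B q q) p
    (hasFDerivAt_apply_self B hB p)).congr_fderiv ?_
  ext w
  simp
  field_simp

theorem fderiv_fderiv_sqrt_apply_self (hB : ∀ u v, B u v = B v u) {p : E} (hp : 0 < B p p)
    (w : E) :
    fderiv ℝ (fderiv ℝ fun q => √(B q q)) p w w
      = (B p p * B w w - B p w ^ 2) / √(B p p) ^ 3 := by
  have hfd : fderiv ℝ (fun q => √(B q q)) =ᶠ[𝓝 p] fun q => (√(B q q))⁻¹ • B q := by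
    filter_upwards [(hasFDerivAt_apply_self B hB p).continuousAt.eventually_ne hp.ne'] with q hq
    exact (hasFDerivAt_sqrt_apply_self B hB hq).fderiv
  have hs : √(B p p) ≠ 0 := (sqrt_pos.2 hp).ne'
  have hinv : HasFDerivAt (fun q => (√(B q q))⁻¹) _ p :=
    (hasDerivAt_inv hs).comp_hasFDerivAt p (hasFDerivAt_sqrt_apply_self B hB hp.ne')
  have hD : HasFDerivAt (fun q => (√(B q q))⁻¹ • B q) _ p := hinv.smul B.hasFDerivAt
  rw [hfd.fderiv_eq, hD.fderiv]
  simp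
  field_simp
  rw [sq_sqrt hp.le]
  ring

end SqrtQuadraticForm

theorem perp_smul (c : ℝ) (p : Fin 2 → ℝ) : perp (c • p) = c • perp p := by
  ext i; fin_cases i <;> simp [perp]

noncomputable def ellipticForm (δ : ℝ) : (Fin 2 → ℝ) →L[ℝ] (Fin 2 → ℝ) →L[ℝ] ℝ :=
  (ContinuousLinearMap.proj 0 : (Fin 2 → ℝ) →L[ℝ] ℝ).smulRight (ContinuousLinearMap.proj 0)
    + δ ^ 2 • (ContinuousLinearMap.proj 1 : (Fin 2 → ℝ) →L[ℝ] ℝ).smulRight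
      (ContinuousLinearMap.proj 1)

section EllipticForm

variable (δ : ℝ)

@[simp]
theorem ellipticForm_apply (p w : Fin 2 → ℝ) :
    ellipticForm δ p w = p 0 * w 0 + δ ^ 2 * (p 1 * w 1) := by
  simp [ellipticForm]

theorem ellipticForm_comm (p w : Fin 2 → ℝ) : ellipticForm δ p w = ellipticForm δ w p := by
  simp only [ellipticForm_apply]; ring

theorem ellipticForm_mul_sub_sq (p w : Fin 2 → ℝ) :
    ellipticForm δ p p * ellipticForm δ w w - ellipticForm δ p w ^ 2
      = δ ^ 2 * (p 0 * w 1 - p 1 * w 0) ^ 2 := by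
  simp only [ellipticForm_apply]; ring

theorem fderiv_fderiv_sqrt_ellipticForm_perp {τ : Fin 2 → ℝ}
    (hτ : 0 < ellipticForm δ (perp τ) (perp τ)) :
    fderiv ℝ (fderiv ℝ fun q => √(ellipticForm δ q q)) (perp τ) τ τ
      = δ ^ 2 * (τ ⬝ᵥ τ) ^ 2 / √(ellipticForm δ (perp τ) (perp τ)) ^ 3 := by
  rw [fderiv_fderiv_sqrt_apply_self _ (ellipticForm_comm δ) hτ, ellipticForm_mul_sub_sq]
  simp [perp, dotProduct, Fin.sum_univ_two]
  ring

end EllipticForm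

noncomputable def ellipse (δ r : ℝ) : Fin 2 → ℝ := ![cos (2 * π * r), δ * sin (2 * π * r)]

noncomputable def ellipseTangent (δ r : ℝ) : Fin 2 → ℝ := ![-sin (2 * π * r), δ * cos (2 * π * r)]

section Ellipse

variable (δ r : ℝ)

theorem hasDerivAt_ellipse : HasDerivAt (ellipse δ) ((2 * π) • ellipseTangent δ r) r := by
  have hlin := (hasDerivAt_id' r).const_mul (2 * π)
  rw [hasDerivAt_pi]
  intro i
  fin_cases i
  · simpa [ellipse, ellipseTangent, mul_comm] using hlin.cos
  · simpa [ellipse, ellipseTangent, mul_comm, mul_left_comm] using hlin.sin.const_mul δ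

theorem hasDerivAt_ellipseTangent :
    HasDerivAt (ellipseTangent δ) (-(2 * π) • ellipse δ r) r := by
  have hlin := (hasDerivAt_id' r).const_mul (2 * π)
  rw [hasDerivAt_pi]
  intro i
  fin_cases i
  · simpa [ellipse, ellipseTangent, mul_comm] using hlin.sin.fun_neg
  · simpa [ellipse, ellipseTangent, mul_comm, mul_left_comm] using hlin.cos.const_mul δ

theorem ellipse_dotProduct_perp_ellipseTangent :
    ellipse δ r ⬝ᵥ perp (ellipseTangent δ r) = -δ := by
  simp [ellipse, ellipseTangent, perp, dotProduct, Fin.sum_univ_two]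
  linear_combination -δ * sin_sq_add_cos_sq (2 * π * r)

theorem ellipticForm_perp_ellipseTangent :
    ellipticForm δ (perp (ellipseTangent δ r)) (perp (ellipseTangent δ r)) = δ ^ 2 := by
  simp [ellipseTangent, perp]
  linear_combination δ ^ 2 * sin_sq_add_cos_sq (2 * π * r)

theorem ellipseTangent_dotProduct_self_pos {δ : ℝ} (hδ : δ ≠ 0) (r : ℝ) :
    0 < ellipseTangent δ r ⬝ᵥ ellipseTangent δ r := by
  simp [ellipseTangent, dotProduct, Fin.sum_univ_two]
  rcases eq_or_ne (sin (2 * π * r)) 0 with hs | hs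
  · have := sin_sq_add_cos_sq (2 * π * r)
    rw [hs] at this ⊢
    nlinarith [sq_pos_of_ne_zero hδ]
  · nlinarith [sq_pos_of_ne_zero hs, sq_nonneg (δ * cos (2 * π * r))]

end Ellipse

theorem hasDerivAt_sqrt_one_sub_two_mul {t : ℝ} (ht : t < 1 / 2) :
    HasDerivAt (fun s => √(1 - 2 * s)) (-(√(1 - 2 * t))⁻¹) t := by
  have hpos : 0 < 1 - 2 * t := by linarith
  refine (((hasDerivAt_id t).const_mul 2).const_sub 1).sqrt hpos.ne' |>.congr_deriv ?_
  simp only [id]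
  field_simp

-- `hPT` and `hBT` say that `P ⬝ᵥ ν = -√(B ν ν)`: `P` lies on the boundary of the Wulff shape of
-- `√B`, with normal `ν`. Both sides then reduce to `1 / a`.
theorem anisotropic_csf_of_wulff_frame {δ a ω : ℝ} (hδ : 0 < δ) (ha : 0 < a) (hω : 0 < ω)
    {P T : Fin 2 → ℝ} (hPT : P ⬝ᵥ perp T = -δ)
    (hBT : ellipticForm δ (perp T) (perp T) = δ ^ 2) (hT : 0 < T ⬝ᵥ T) {τ ν : Fin 2 → ℝ}
    (hτ : τ = (√(((a * ω) • T) ⬝ᵥ ((a * ω) • T)))⁻¹ • ((a * ω) • T)) (hν : ν = perp τ) :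
    (√(ellipticForm δ ν ν))⁻¹ * ((-a⁻¹ • P) ⬝ᵥ ν)
      = ((a * ω) • -ω • P) ⬝ᵥ ν / (((a * ω) • T) ⬝ᵥ ((a * ω) • T))
        * fderiv ℝ (fderiv ℝ fun q => √(ellipticForm δ q q)) ν τ τ := by
  set w := √(T ⬝ᵥ T)
  have hw : 0 < w := sqrt_pos.2 hT
  have hw2 : w ^ 2 = T ⬝ᵥ T := sq_sqrt hT.le
  have hxρxρ : ((a * ω) • T) ⬝ᵥ ((a * ω) • T) = (a * ω * w) ^ 2 := by
    rw [smul_dotProduct, dotProduct_smul, mul_pow, hw2, smul_eq_mul, smul_eq_mul]; ring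
  have hτ' : τ = w⁻¹ • T := by
    rw [hτ, hxρxρ, sqrt_sq (by positivity), smul_smul]; congr 1; field_simp
  have hν' : ν = w⁻¹ • perp T := by rw [hν, hτ', perp_smul]
  have hBν : ellipticForm δ ν ν = (δ / w) ^ 2 := by
    simp only [hν', map_smul, _root_.smul_apply, smul_eq_mul, hBT]
    ring
  have hττ : τ ⬝ᵥ τ = 1 := by
    rw [hτ', smul_dotProduct, dotProduct_smul, smul_eq_mul, smul_eq_mul, ← hw2]
    field_simp
  have hhess :
      fderiv ℝ (fderiv ℝ fun q => √(ellipticForm δ q q)) ν τ τ = δ ^ 2 / (δ / w) ^ 3 := by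
    rw [hν, fderiv_fderiv_sqrt_ellipticForm_perp δ (by rw [← hν, hBν]; positivity), ← hν,
      hBν, sqrt_sq (by positivity), hττ, one_pow, mul_one]
  have hPν : P ⬝ᵥ ν = -δ / w := by
    rw [hν', dotProduct_smul, hPT, smul_eq_mul]; ring
  rw [hhess, hBν, sqrt_sq (by positivity), hxρxρ, smul_dotProduct, smul_dotProduct,
    smul_dotProduct, hPν]
  simp only [smul_eq_mul]
  field_simp

theorem shrinking_ellipse_solves_anisotropic_csf_general
    (δ : ℝ) (hδ0 : 0 < δ) (ρ t : ℝ) (ht : t < 1 / 2)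
    (γ₀ : (Fin 2 → ℝ) → ℝ)
    (hγ₀ : γ₀ = fun p => Real.sqrt ((p 0) ^ 2 + δ ^ 2 * (p 1) ^ 2))
    (x : ℝ → ℝ → Fin 2 → ℝ)
    (hx : x = fun r s => ![Real.sqrt (1 - 2 * s) * Real.cos (2 * π * r),
                           Real.sqrt (1 - 2 * s) * δ * Real.sin (2 * π * r)])
    (xt xρ xρρ : Fin 2 → ℝ)
    (hxt : xt = deriv (fun s => x ρ s) t)
    (hxρ : xρ = deriv (fun r => x r t) ρ)
    (hxρρ : xρρ = deriv (deriv (fun r => x r t)) ρ)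
    (τ ν : Fin 2 → ℝ) (κ : ℝ)
    (hτ : τ = (Real.sqrt (xρ ⬝ᵥ xρ))⁻¹ • xρ)
    (hν : ν = perp τ)
    (hκ : κ = (xρρ ⬝ᵥ ν) / (xρ ⬝ᵥ xρ)) :
    (γ₀ ν)⁻¹ * (xt ⬝ᵥ ν) = κ * fderiv ℝ (fderiv ℝ γ₀) ν τ τ := by
  have hγ : γ₀ = fun p => √(ellipticForm δ p p) := by
    rw [hγ₀]; funext p; simp only [ellipticForm_apply]; ring_nf
  have hx' : x = fun r s => √(1 - 2 * s) • ellipse δ r := by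
    rw [hx]; ext r s i; fin_cases i <;> simp [ellipse]; ring
  have hdx :
      deriv (fun r => x r t) = fun r => (√(1 - 2 * t) * (2 * π)) • ellipseTangent δ r := by
    ext1 r; rw [hx', mul_smul]; exact ((hasDerivAt_ellipse δ r).fun_const_smul _).deriv
  have hxt' : xt = -(√(1 - 2 * t))⁻¹ • ellipse δ ρ := by
    rw [hxt, hx']; exact ((hasDerivAt_sqrt_one_sub_two_mul ht).smul_const _).deriv
  have hxρρ' : xρρ = (√(1 - 2 * t) * (2 * π)) • -(2 * π) • ellipse δ ρ := by
    rw [hxρρ, hdx]; exact ((hasDerivAt_ellipseTangent δ ρ).fun_const_smul _).deriv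
  rw [hxρ, hdx] at hτ hκ
  rw [hκ, hxt', hxρρ', hγ]
  exact anisotropic_csf_of_wulff_frame hδ0 (sqrt_pos.2 (by linarith)) two_pi_pos
    (ellipse_dotProduct_perp_ellipseTangent δ ρ) (ellipticForm_perp_ellipseTangent δ ρ)
    (ellipseTangent_dotProduct_self_pos hδ0.ne' ρ) hτ hν

/-- The shrinking ellipses x(ρ,t) = √(1−2t)(cos 2πρ, δ sin 2πρ) satisfy the
    anisotropic curve shortening law (1/γ₀(ν)) x_t · ν = κ γ₀''(ν)τ·τ for the
    elliptic anisotropy γ₀(p) = √(p₁² + δ²p₂²). -/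
theorem shrinking_ellipse_solves_anisotropic_csf
    (δ : ℝ) (hδ0 : 0 < δ) (hδ1 : δ ≤ 1) (ρ t : ℝ) (ht0 : 0 ≤ t) (ht : t < 1 / 2)
    (γ₀ : (Fin 2 → ℝ) → ℝ)
    (hγ₀ : γ₀ = fun p => Real.sqrt ((p 0) ^ 2 + δ ^ 2 * (p 1) ^ 2))
    (x : ℝ → ℝ → Fin 2 → ℝ)
    (hx : x = fun r s => ![Real.sqrt (1 - 2 * s) * Real.cos (2 * π * r),
                           Real.sqrt (1 - 2 * s) * δ * Real.sin (2 * π * r)])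
    (xt xρ xρρ : Fin 2 → ℝ)
    (hxt : xt = deriv (fun s => x ρ s) t)
    (hxρ : xρ = deriv (fun r => x r t) ρ)
    (hxρρ : xρρ = deriv (deriv (fun r => x r t)) ρ)
    (τ ν : Fin 2 → ℝ) (κ : ℝ)
    (hτ : τ = (Real.sqrt (xρ ⬝ᵥ xρ))⁻¹ • xρ)
    (hν : ν = perp τ)
    (hκ : κ = (xρρ ⬝ᵥ ν) / (xρ ⬝ᵥ xρ)) :
    (γ₀ ν)⁻¹ * (xt ⬝ᵥ ν) = κ * fderiv ℝ (fderiv ℝ γ₀) ν τ τ :=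
  shrinking_ellipse_solves_anisotropic_csf_general δ hδ0 ρ t ht γ₀ hγ₀ x hx xt xρ xρρ hxt hxρ hxρρ τ
    ν κ hτ hν hκ
end
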